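/- arXiv:2012.13822 — 2 statements merged into one kernel-verified Lean document; each statement's English description precedes it below -/
import Mathlib

section
/- Let n be a nonnegative integer, let p, q be nonnegative integers, and let a, c, x, a_1, …, a_p, b_1, …, b_q be complex numbers such that (a)_n ≠ 0, (1+a−c)_n ≠ 0, (c)_n ≠ 0, and (b_j)_n ≠ 0 for each j. Then the terminating series _{p+3}F_{q+3}(−n, a/2, (a+1)/2, a_1, …, a_p ; a, 1+a−c, c, b_1, …, b_q ; x) equals the double sum Σ_{m=0}^{n} [ (−n)_m (a_1)_m ⋯ (a_p)_m (x/4)^m / ( m! (1+a−c)_m (b_1)_m ⋯ (b_q)_m ) ] · _{p+1}F_{q+1}(−n+m, a_1+m, …, a_p+m ; c, b_1+m, …, b_q+m ; x/4), where the inner series is the finite sum over t from 0 to n−m. -/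
/-!
Writing `(a)_{2k} = (a)_k (a+k)_k = 4^k (a/2)_k ((a+1)/2)_k`, the `k`-th term of the left side
becomes `(-n)_k ∏(a_j)_k (x/4)^k (a+k)_k / (k! (1+a-c)_k (c)_k ∏(b_j)_k)`. By Chu–Vandermonde,
`(a+k)_k / (k! (1+a-c)_k (c)_k) = ∑_{m+t=k} 1 / (m! t! (1+a-c)_m (c)_t)`, and splitting every
other Pochhammer symbol as `(z)_{m+t} = (z)_m (z+m)_t` turns the resulting sum over `m + t = k`,
`k ≤ n`, into the double sum on the right.
-/

open Finset

/-- The rising factorial (Pochhammer symbol) `(a)_k = a(a+1)⋯(a+k-1)`. -/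
noncomputable def poch (a : ℂ) (k : ℕ) : ℂ := ∏ i ∈ Finset.range k, (a + i)

open Nat

lemma poch_succ (z : ℂ) (k : ℕ) : poch z (k + 1) = poch z k * (z + k) :=
  prod_range_succ _ k

lemma poch_add (z : ℂ) (m t : ℕ) : poch z (m + t) = poch z m * poch (z + m) t := by
  simp only [poch, prod_range_add, Nat.cast_add, add_assoc]

lemma poch_mul_poch_add_sub (z : ℂ) {m k : ℕ} (h : m ≤ k) :
    poch z m * poch (z + m) (k - m) = poch z k := by
  rw [← poch_add, Nat.add_sub_cancel' h]

lemma poch_ne_zero_of_le {z : ℂ} {m k : ℕ} (h : m ≤ k) (hz : poch z k ≠ 0) : poch z m ≠ 0 :=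
  left_ne_zero_of_mul (poch_mul_poch_add_sub z h ▸ hz)

lemma prod_poch_mul_prod_poch_add_sub {ι : Type*} [Fintype ι] (A : ι → ℂ) {m k : ℕ}
    (h : m ≤ k) : (∏ j, poch (A j) m) * ∏ j, poch (A j + m) (k - m) = ∏ j, poch (A j) k := by
  rw [← prod_mul_distrib]
  exact prod_congr rfl fun j _ => poch_mul_poch_add_sub (A j) h

lemma poch_eq_ascPochhammer_eval (z : ℂ) (k : ℕ) : poch z k = (ascPochhammer ℂ k).eval z := by
  induction k with
  | zero => simp [poch]
  | succ k ih => rw [poch_succ, ih, ascPochhammer_succ_eval]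

lemma poch_eq_descPochhammer_smeval (z : ℂ) (k : ℕ) :
    poch z k = (descPochhammer ℤ k).smeval (z + k - 1) := by
  rw [Polynomial.descPochhammer_smeval_eq_ascPochhammer, Polynomial.ascPochhammer_smeval_eq_eval,
    poch_eq_ascPochhammer_eval, show z + k - 1 - k + 1 = z by ring]

/-- Chu–Vandermonde, read off from the falling-factorial form at `(β + k - 1) + (α + k - 1)`. -/
lemma poch_eq_sum_choose_mul_poch_mul_poch (α β : ℂ) (k : ℕ) :
    poch (α + β + k - 1) k =
      ∑ m ∈ range (k + 1), k.choose m * (poch (β + (k - m : ℕ)) m * poch (α + m) (k - m)) := by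
  rw [poch_eq_descPochhammer_smeval,
    show α + β + k - 1 + k - 1 = (β + k - 1) + (α + k - 1) by ring,
    Ring.descPochhammer_smeval_add k (Commute.all _ _), Nat.sum_antidiagonal_eq_sum_range_succ_mk]
  refine sum_congr rfl fun m hm => ?_
  have hmk : ((k - m : ℕ) : ℂ) = k - m := Nat.cast_sub (mem_range_succ_iff.mp hm)
  rw [poch_eq_descPochhammer_smeval, poch_eq_descPochhammer_smeval, hmk]
  ring_nf

lemma one_div_factorial_mul_poch_eq (α β : ℂ) {m k : ℕ} (h : m ≤ k)
    (hα : poch α k ≠ 0) (hβ : poch β k ≠ 0) :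
    1 / ((m ! : ℂ) * (k - m)! * poch α m * poch β (k - m)) =
      k.choose m * (poch (β + (k - m : ℕ)) m * poch (α + m) (k - m)) /
        (k ! * poch α k * poch β k) := by
  have hβ' := poch_mul_poch_add_sub β (Nat.sub_le k m)
  rw [Nat.sub_sub_self h] at hβ'
  rw [← poch_mul_poch_add_sub α h] at hα ⊢
  rw [← hβ'] at hβ ⊢
  obtain ⟨hα₁, hα₂⟩ := mul_ne_zero_iff.mp hα
  obtain ⟨hβ₁, hβ₂⟩ := mul_ne_zero_iff.mp hβ
  have hchoose : (k.choose m : ℂ) ≠ 0 := Nat.cast_ne_zero.mpr (Nat.choose_pos h).ne'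
  rw [← Nat.choose_mul_factorial_mul_factorial h]
  push_cast
  field_simp

lemma sum_one_div_factorial_mul_poch (α β : ℂ) {k : ℕ}
    (hα : poch α k ≠ 0) (hβ : poch β k ≠ 0) :
    ∑ m ∈ range (k + 1), 1 / ((m ! : ℂ) * (k - m)! * poch α m * poch β (k - m)) =
      poch (α + β + k - 1) k / (k ! * poch α k * poch β k) := by
  rw [sum_congr rfl fun m hm => one_div_factorial_mul_poch_eq α β (mem_range_succ_iff.mp hm) hα hβ,
    ← sum_div, poch_eq_sum_choose_mul_poch_mul_poch]

lemma poch_two_mul (a : ℂ) (k : ℕ) :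
    poch a (2 * k) = 4 ^ k * poch (a / 2) k * poch ((a + 1) / 2) k := by
  induction k with
  | zero => simp [poch]
  | succ k ih =>
    rw [show 2 * (k + 1) = 2 * k + 1 + 1 by ring, poch_succ, poch_succ, poch_succ, poch_succ, ih]
    push_cast
    ring

lemma sum_mul_sum_range_sub_eq (n : ℕ) (f : ℕ → ℂ) (g : ℕ → ℕ → ℂ) :
    ∑ m ∈ range (n + 1), f m * ∑ t ∈ range (n - m + 1), g m t =
      ∑ k ∈ range (n + 1), ∑ m ∈ range (k + 1), f m * g m (k - m) := by
  refine (sum_congr rfl fun m hm => ?_).trans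
    (sum_range_diag_flip (n + 1) fun m t => f m * g m t).symm
  rw [mul_sum, Nat.sub_add_comm (mem_range_succ_iff.mp hm)]

lemma term_mul_term_eq {ι κ : Type*} [Fintype ι] [Fintype κ] (z y α β : ℂ) (A : ι → ℂ)
    (B : κ → ℂ) {m k : ℕ} (h : m ≤ k) :
    (poch z m * (∏ j, poch (A j) m) * y ^ m) / ((m ! : ℂ) * poch α m * ∏ j, poch (B j) m) *
      ((poch (z + m) (k - m) * ∏ j, poch (A j + m) (k - m)) /
        (((k - m)! : ℂ) * poch β (k - m) * ∏ j, poch (B j + m) (k - m)) * y ^ (k - m)) =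
      poch z k * (∏ j, poch (A j) k) * y ^ k / (∏ j, poch (B j) k) *
        (1 / ((m ! : ℂ) * (k - m)! * poch α m * poch β (k - m))) := by
  rw [← poch_mul_poch_add_sub z h, ← prod_poch_mul_prod_poch_add_sub A h,
    ← prod_poch_mul_prod_poch_add_sub B h, ← pow_mul_pow_sub y h]
  ring

theorem stmt_0_general (n p q : ℕ) (a c x : ℂ) (A : Fin p → ℂ) (B : Fin q → ℂ)
    (ha : poch a n ≠ 0) (hac : poch (1 + a - c) n ≠ 0) (hc : poch c n ≠ 0) :
    ∑ k ∈ range (n + 1),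
      (poch (-(n : ℂ)) k * poch (a / 2) k * poch ((a + 1) / 2) k * ∏ j, poch (A j) k) /
        ((Nat.factorial k : ℂ) * poch a k * poch (1 + a - c) k * poch c k *
          ∏ j, poch (B j) k) * x ^ k
    = ∑ m ∈ range (n + 1),
        ((poch (-(n : ℂ)) m * (∏ j, poch (A j) m) * (x / 4) ^ m) /
          ((Nat.factorial m : ℂ) * poch (1 + a - c) m * ∏ j, poch (B j) m)) *
        ∑ t ∈ range (n - m + 1),
          (poch (-(n : ℂ) + m) t * ∏ j, poch (A j + m) t) /
            ((Nat.factorial t : ℂ) * poch c t * ∏ j, poch (B j + m) t) * (x / 4) ^ t := by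
  rw [sum_mul_sum_range_sub_eq]
  refine sum_congr rfl fun k hk => ?_
  have hkn := mem_range_succ_iff.mp hk
  rw [sum_congr rfl fun m hm => term_mul_term_eq (-(n : ℂ)) (x / 4) (1 + a - c) c A B
      (mem_range_succ_iff.mp hm), ← mul_sum,
    sum_one_div_factorial_mul_poch _ _ (poch_ne_zero_of_le hkn hac) (poch_ne_zero_of_le hkn hc),
    show 1 + a - c + c + k - 1 = a + k by ring]
  have hak := poch_ne_zero_of_le hkn ha
  have hshift : poch (a + k) k = 4 ^ k * poch (a / 2) k * poch ((a + 1) / 2) k / poch a k := by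
    rw [eq_div_iff hak, mul_comm, ← poch_add, ← two_mul, poch_two_mul]
  rw [hshift, div_pow]
  field_simp

theorem stmt_0 (n p q : ℕ) (a c x : ℂ) (A : Fin p → ℂ) (B : Fin q → ℂ)
    (ha : poch a n ≠ 0) (hac : poch (1 + a - c) n ≠ 0) (hc : poch c n ≠ 0)
    (hB : ∀ j : Fin q, poch (B j) n ≠ 0) :
    ∑ k ∈ range (n + 1),
      (poch (-(n : ℂ)) k * poch (a / 2) k * poch ((a + 1) / 2) k * ∏ j, poch (A j) k) /
        ((Nat.factorial k : ℂ) * poch a k * poch (1 + a - c) k * poch c k *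
          ∏ j, poch (B j) k) * x ^ k
    = ∑ m ∈ range (n + 1),
        ((poch (-(n : ℂ)) m * (∏ j, poch (A j) m) * (x / 4) ^ m) /
          ((Nat.factorial m : ℂ) * poch (1 + a - c) m * ∏ j, poch (B j) m)) *
        ∑ t ∈ range (n - m + 1),
          (poch (-(n : ℂ) + m) t * ∏ j, poch (A j + m) t) /
            ((Nat.factorial t : ℂ) * poch c t * ∏ j, poch (B j + m) t) * (x / 4) ^ t :=
  stmt_0_general n p q a c x A B ha hac hc
end

section
/- Fix a nonnegative integer n. Let σ₁ : ℂ³ → ℂ³ be the bijection σ₁(a,b,c) = (a, b, 1+a−c) and let σ₂ : ℂ³ → ℂ³ be the bijection σ₂(a,b,c) = (c−b−n, c−a−n, c). Then the subgroup of the group of bijections of ℂ³ generated by σ₁ and σ₂ is isomorphic to the symmetric group S₃ on three letters (a group of order 6). -/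
/-! In the affine coordinates `u = (c, 1 + a - c, 1 - b - n)` on `ℂ³`, `σ₁` swaps `u₀, u₁` and
`σ₂` swaps `u₁, u₂`. Permuting these coordinates is therefore a faithful representation of `S₃`
on `ℂ³` sending the generators `(0 1)`, `(1 2)` of `S₃` to `σ₁`, `σ₂`, so it maps `S₃`
isomorphically onto the group they generate. -/

open Equiv Function

def Equiv.Perm.arrowCongrHom (α β : Type*) : Perm α →* Perm (α → β) where
  toFun π := π.arrowCongr (Equiv.refl β)
  map_one' := arrowCongr_refl
  map_mul' _ _ := rfl

theorem Equiv.Perm.arrowCongrHom_injective (α β : Type*) [Nontrivial β] :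
    Injective (Perm.arrowCongrHom α β) := by
  classical
  intro π ρ h
  obtain ⟨b₀, b₁, hb⟩ := exists_pair_ne β
  refine symm_bijective.injective (Perm.ext fun a => ?_)
  let f : α → β := fun j => if j = π.symm a then b₁ else b₀
  have hf : f (π.symm a) = f (ρ.symm a) := congrFun (Perm.ext_iff.mp h f) a
  by_contra hne
  simp only [f, if_neg (Ne.symm hne)] at hf
  exact hb hf.symm

theorem Equiv.Perm.closure_swap_zero_one_swap_one_two :
    Subgroup.closure {swap (0 : Fin 3) 1, swap 1 2} = ⊤ := by
  refine Subgroup.closure_eq_top_of_mclosure_eq_top ?_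
  rw [← Perm.mclosure_swap_castSucc_succ 2, Fin.range_fin_succ, Set.range_unique]
  rfl

noncomputable def MonoidHom.closureImageEquiv {G H : Type*} [Group G] [Group H] (f : G →* H)
    (hf : Injective f) {s : Set G} (hs : Subgroup.closure s = ⊤) :
    Subgroup.closure (f '' s) ≃* G :=
  (MulEquiv.subgroupCongr (by rw [← MonoidHom.map_closure, hs, MonoidHom.range_eq_map])).trans
    (MonoidHom.ofInjective hf).symm

def affineCoords (n : ℕ) : ℂ × ℂ × ℂ ≃ (Fin 3 → ℂ) where
  toFun x := ![x.2.2, 1 + x.1 - x.2.2, 1 - x.2.1 - n]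
  invFun u := (u 0 + u 1 - 1, 1 - u 2 - n, u 0)
  left_inv := by
    rintro ⟨a, b, c⟩
    simp only [Matrix.cons_val_zero, Matrix.cons_val_one, Matrix.cons_val_two, Matrix.tail_cons,
      Matrix.head_cons]
    ring_nf
  right_inv u := by
    ext i
    fin_cases i <;> simp [sub_sub]

theorem affineCoords_apply (n : ℕ) (a b c : ℂ) :
    affineCoords n (a, b, c) = ![c, 1 + a - c, 1 - b - n] :=
  rfl

theorem affineCoords_symm_apply (n : ℕ) (u : Fin 3 → ℂ) :
    (affineCoords n).symm u = (u 0 + u 1 - 1, 1 - u 2 - n, u 0) :=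
  rfl

def affinePermHom (n : ℕ) : Perm (Fin 3) →* Perm (ℂ × ℂ × ℂ) :=
  (affineCoords n).symm.permCongrHom.toMonoidHom.comp (Perm.arrowCongrHom (Fin 3) ℂ)

theorem affinePermHom_apply (n : ℕ) (π : Perm (Fin 3)) (x : ℂ × ℂ × ℂ) :
    affinePermHom n π x = (affineCoords n).symm (affineCoords n x ∘ π.symm) :=
  rfl

theorem affinePermHom_injective (n : ℕ) : Injective (affinePermHom n) := by
  rw [affinePermHom, MonoidHom.coe_comp]
  exact (MulEquiv.injective _).comp (Perm.arrowCongrHom_injective _ _)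

theorem affinePermHom_swap_zero_one (n : ℕ) (a b c : ℂ) :
    affinePermHom n (swap 0 1) (a, b, c) = (a, b, 1 + a - c) := by
  rw [affinePermHom_apply, affineCoords_apply, symm_swap, Matrix.cons_cons_comp_swap_zero_one,
    affineCoords_symm_apply]
  simp only [Matrix.cons_val_zero, Matrix.cons_val_one, Matrix.cons_val_two, Matrix.tail_cons,
    Matrix.head_cons]
  ring_nf

theorem affinePermHom_swap_one_two (n : ℕ) (a b c : ℂ) :
    affinePermHom n (swap 1 2) (a, b, c) = (c - b - n, c - a - n, c) := by
  rw [affinePermHom_apply, affineCoords_apply, symm_swap, affineCoords_symm_apply]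
  simp only [comp_apply, swap_apply_left, swap_apply_right, swap_apply_of_ne_of_ne, Fin.reduceEq,
    ne_eq, not_false_eq_true, Matrix.cons_val_zero, Matrix.cons_val_one, Matrix.cons_val_two,
    Matrix.tail_cons, Matrix.head_cons]
  ring_nf

theorem stmt_3 (n : ℕ) (σ₁ σ₂ : Equiv.Perm (ℂ × ℂ × ℂ))
    (h₁ : ∀ a b c : ℂ, σ₁ (a, b, c) = (a, b, 1 + a - c))
    (h₂ : ∀ a b c : ℂ, σ₂ (a, b, c) = (c - b - (n : ℂ), c - a - (n : ℂ), c)) :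
    Nonempty ((Subgroup.closure {σ₁, σ₂} : Subgroup (Equiv.Perm (ℂ × ℂ × ℂ)))
      ≃* Equiv.Perm (Fin 3)) := by
  obtain rfl : affinePermHom n (swap 0 1) = σ₁ :=
    Perm.ext fun ⟨a, b, c⟩ => by rw [h₁, affinePermHom_swap_zero_one]
  obtain rfl : affinePermHom n (swap 1 2) = σ₂ :=
    Perm.ext fun ⟨a, b, c⟩ => by rw [h₂, affinePermHom_swap_one_two]
  rw [← Set.image_pair]
  exact ⟨(affinePermHom n).closureImageEquiv (affinePermHom_injective n)
    Perm.closure_swap_zero_one_swap_one_two⟩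
end
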